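/- arXiv:1108.1988 — 2 statements merged into one kernel-verified Lean document; each statement's English description precedes it below -/
import Mathlib

section
/- For any total prior P(I) on input pairs, the Bayesian inverse g̃ᵀ_{P(I)} of g̃ enables perfect signaling from Alice to Bob when Bob fixes his input to 0: g̃ᵀ_{P(I)}(0,0)(a_I, b_I) = 0 unless b_I = 0, and g̃ᵀ_{P(I)}(1,0)(a_I, b_I) = 0 unless b_I = 1. -/
/-- A pairial index: Alice's bit and Bob's bit. -/
abbrev Pair := Fin 2 × Fin 2

/-- A two-party correlation matrix: `g I O` is the probability of output pair
`O = (a_O, b_O)` given input pair `I = (a_I, b_I)`. -/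
def IsCorrMat (g : Pair → Pair → ℝ) : Prop :=
  (∀ I O, 0 ≤ g I O) ∧ ∀ I, ∑ O : Pair, g I O = 1

/-- A 2-by-2 stochastic matrix, `m i o` is the probability of output `o` given
input `i` (columns indexed by inputs sum to 1). -/
def IsStoch (m : Fin 2 → Fin 2 → ℝ) : Prop :=
  (∀ i o, 0 ≤ m i o) ∧ ∀ i, ∑ o, m i o = 1

/-- A classical (local hidden variable) correlation matrix. -/
def IsClassical (g : Pair → Pair → ℝ) : Prop :=
  ∃ (n : ℕ) (P : Fin n → ℝ) (ma mb : Fin n → Fin 2 → Fin 2 → ℝ),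
    (∀ i, 0 ≤ P i) ∧ (∑ i, P i = 1) ∧
    (∀ i, IsStoch (ma i)) ∧ (∀ i, IsStoch (mb i)) ∧
    (∀ I O, g I O = ∑ i, P i * (ma i I.1 O.1 * mb i I.2 O.2))

/-- Non-signaling from Alice to Bob: Bob's marginal is independent of Alice's input. -/
def NonSigAtoB (g : Pair → Pair → ℝ) : Prop :=
  ∀ bI bO : Fin 2, ∑ aO, g (0, bI) (aO, bO) = ∑ aO, g (1, bI) (aO, bO)

/-- Non-signaling from Bob to Alice. -/
def NonSigBtoA (g : Pair → Pair → ℝ) : Prop :=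
  ∀ aI aO : Fin 2, ∑ bO, g (aI, 0) (aO, bO) = ∑ bO, g (aI, 1) (aO, bO)

/-- Index of a pair of bits into `Fin 4`, in the order (0,0),(0,1),(1,0),(1,1). -/
def idx (p : Pair) : Fin 4 := ⟨2 * p.1.val + p.2.val, by omega⟩

/-- The correlation matrix g̃ of Theorem 1; rows are output pairs, columns are
input pairs, both in the order (0,0),(0,1),(1,0),(1,1). -/
noncomputable def gtilde (I O : Pair) : ℝ :=
  (!![1/4, 0,   1/4, 0;
      1/4, 1/2, 1/4, 1/2;
      0,   1/4, 0,   1/4;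
      1/2, 1/4, 1/2, 1/4] : Matrix (Fin 4) (Fin 4) ℝ) (idx O) (idx I)

/-- A total prior on input pairs. -/
def IsTotalPrior (P : Pair → ℝ) : Prop :=
  (∀ I, 0 < P I) ∧ ∑ I : Pair, P I = 1

/-- The posterior distribution on output pairs induced by `g` and the prior `P`. -/
def post (g : Pair → Pair → ℝ) (P : Pair → ℝ) (O : Pair) : ℝ :=
  ∑ I : Pair, g I O * P I

/-- The Bayesian inverse (time-reverse) of `g` with respect to the prior `P`:
output pairs become inputs and vice versa. -/
noncomputable def binv (g : Pair → Pair → ℝ) (P : Pair → ℝ) (O I : Pair) : ℝ :=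
  g I O * P I / post g P O

/-- for any total prior, the Bayesian inverse of g̃ enables perfect
signaling from Alice to Bob when Bob fixes his (reversed) input to 0: Bob's
output `b_I` equals Alice's input `a_O` with certainty. -/
theorem gtilde_binv_perfect_signaling (P : Pair → ℝ) (hP : IsTotalPrior P) :
    (∀ aI bI : Fin 2, bI ≠ 0 → binv gtilde P (0, 0) (aI, bI) = 0) ∧
    (∀ aI bI : Fin 2, bI ≠ 1 → binv gtilde P (1, 0) (aI, bI) = 0) := by
  constructor
  · intro aI bI hbI
    fin_cases bI
    · exact absurd rfl hbI
    · fin_cases aI <;>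
        simp [binv, gtilde, idx, Matrix.of_apply, Matrix.cons_val', Matrix.cons_val_zero,
          Matrix.cons_val_one]
  · intro aI bI hbI
    fin_cases bI
    · fin_cases aI <;>
        simp [binv, gtilde, idx, Matrix.of_apply, Matrix.cons_val', Matrix.cons_val_zero,
          Matrix.cons_val_one]
    · exact absurd rfl hbI
end

section
/- The PR-box correlation matrix pr (probabilistic version: pr(a_I,b_I)(a_O,b_O) = 1/2 if a_O ⊕ b_O = a_I ∧ b_I, else 0) is non-signaling but not classical: it admits no decomposition as a convex combination of products of 2-by-2 stochastic matrices. -/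
/-- The probabilistic PR box: probability 1/2 on each output pair with
`a_O ⊕ b_O = a_I ∧ b_I` (addition in `Fin 2` is XOR, multiplication is AND). -/
noncomputable def prBox (I O : Pair) : ℝ := if O.1 + O.2 = I.1 * I.2 then 1/2 else 0

/-- CHSH score of a local box is at most 3. -/
lemma chsh_bound (ma mb : Fin 2 → Fin 2 → ℝ) (ha : IsStoch ma) (hb : IsStoch mb) :
    ∑ I : Pair, ∑ O : Pair,
      (if O.1 + O.2 = I.1 * I.2 then ma I.1 O.1 * mb I.2 O.2 else 0) ≤ 3 := by
  have ha00 := ha.1 0 0; have ha01 := ha.1 0 1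
  have ha10 := ha.1 1 0; have ha11 := ha.1 1 1
  have hb00 := hb.1 0 0; have hb01 := hb.1 0 1
  have hb10 := hb.1 1 0; have hb11 := hb.1 1 1
  have hsa0 := ha.2 0; have hsa1 := ha.2 1
  have hsb0 := hb.2 0; have hsb1 := hb.2 1
  simp only [Fin.sum_univ_two] at hsa0 hsa1 hsb0 hsb1
  have e1 : ma 0 1 = 1 - ma 0 0 := by linarith
  have e2 : ma 1 1 = 1 - ma 1 0 := by linarith
  have e3 : mb 0 1 = 1 - mb 0 0 := by linarith
  have e4 : mb 1 1 = 1 - mb 1 0 := by linarith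
  simp only [Fintype.sum_prod_type, Fin.sum_univ_two, Fin.reduceAdd, Fin.reduceMul,
    Fin.reduceEq, if_true, if_false, reduceIte, e1, e2, e3, e4]
  norm_num
  nlinarith [mul_nonneg (mul_nonneg ha00 (by linarith : (0:ℝ) ≤ 1 - mb 0 0))
      (by linarith : (0:ℝ) ≤ 1 - mb 1 0),
    mul_nonneg (mul_nonneg (by linarith : (0:ℝ) ≤ 1 - ma 0 0) hb00) hb10,
    mul_nonneg (mul_nonneg hb00 (by linarith : (0:ℝ) ≤ 1 - ma 1 0))
      (by linarith : (0:ℝ) ≤ 1 - mb 1 0),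
    mul_nonneg (mul_nonneg ha10 hb10) (by linarith : (0:ℝ) ≤ 1 - mb 0 0)]

/-- the PR box is non-signaling but not classical. -/
theorem prBox_nonsignaling_not_classical :
    NonSigAtoB prBox ∧ NonSigBtoA prBox ∧ ¬ IsClassical prBox := by
  refine ⟨?_, ?_, ?_⟩
  · intro bI bO
    fin_cases bI <;> fin_cases bO <;>
      simp [prBox, Fin.sum_univ_two]
  · intro aI aO
    fin_cases aI <;> fin_cases aO <;>
      simp [prBox, Fin.sum_univ_two]
  · rintro ⟨n, P, ma, mb, hP0, hP1, hma, hmb, hg⟩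
    -- CHSH score
    have key : (4 : ℝ) ≤ 3 := by
      have hpr : ∑ I : Pair, ∑ O : Pair,
          (if O.1 + O.2 = I.1 * I.2 then prBox I O else 0) = 4 := by
        simp only [Fintype.sum_prod_type, Fin.sum_univ_two, prBox, Fin.reduceAdd,
          Fin.reduceMul, Fin.reduceEq, if_true, if_false, reduceIte]
        norm_num
      calc (4 : ℝ) = ∑ I : Pair, ∑ O : Pair,
            (if O.1 + O.2 = I.1 * I.2 then prBox I O else 0) := hpr.symm
        _ = ∑ i, P i * ∑ I : Pair, ∑ O : Pair,
            (if O.1 + O.2 = I.1 * I.2 then ma i I.1 O.1 * mb i I.2 O.2 else 0) := by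
            have hpt : ∀ I O : Pair, (if O.1 + O.2 = I.1 * I.2 then prBox I O else 0)
                = ∑ i, P i * (if O.1 + O.2 = I.1 * I.2 then ma i I.1 O.1 * mb i I.2 O.2 else 0) := by
              intro I O
              by_cases h : O.1 + O.2 = I.1 * I.2
              · simp only [h, if_pos, if_true]; exact hg I O
              · simp [h]
            simp only [hpt, Finset.mul_sum]
            calc (∑ I : Pair, ∑ O : Pair, ∑ i, P i *
                    (if O.1 + O.2 = I.1 * I.2 then ma i I.1 O.1 * mb i I.2 O.2 else 0))
                = ∑ I : Pair, ∑ i, ∑ O : Pair, P i *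
                    (if O.1 + O.2 = I.1 * I.2 then ma i I.1 O.1 * mb i I.2 O.2 else 0) :=
                  Finset.sum_congr rfl fun I _ => Finset.sum_comm
              _ = ∑ i, ∑ I : Pair, ∑ O : Pair, P i *
                    (if O.1 + O.2 = I.1 * I.2 then ma i I.1 O.1 * mb i I.2 O.2 else 0) :=
                  Finset.sum_comm
        _ ≤ ∑ i, P i * 3 := by
            refine Finset.sum_le_sum fun i _ => ?_
            exact mul_le_mul_of_nonneg_left (chsh_bound _ _ (hma i) (hmb i)) (hP0 i)
        _ = 3 := by rw [← Finset.sum_mul, hP1, one_mul]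
    linarith
end
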